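/- arXiv:2212.08501 — 4 statements merged into one kernel-verified Lean document; each statement's English description precedes it below -/
import Mathlib

section
/- The map from ℚ³ to the set of double cosets P₁\G/P₃ sending (x, y, z) to the double coset P₁ · ((x, 0, 0), [0, 0, y, z]) · P₃ is a bijection; that is, every element g of G can be written as g = h · ((x, 0, 0), [0, 0, y, z]) · k with h ∈ P₁ and k ∈ P₃ for exactly one triple (x, y, z) ∈ ℚ³. -/
/-- The rational reduced grading group `rGr(Z_α) ⊗ ℚ` of the torus arc diagram:
the underlying set is `ℚ × ℚ × ℚ`. -/
@[ext]
structure Galpha where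
  j : ℚ
  p : ℚ
  q : ℚ

namespace Galpha

instance : Mul Galpha :=
  ⟨fun a b => ⟨a.j + b.j - (a.p * b.q - a.q * b.p), a.p + b.p, a.q + b.q⟩⟩

instance : One Galpha := ⟨⟨0, 0, 0⟩⟩

instance : Inv Galpha := ⟨fun a => ⟨-a.j, -a.p, -a.q⟩⟩

@[simp] lemma mul_def (a b : Galpha) :
    a * b = ⟨a.j + b.j - (a.p * b.q - a.q * b.p), a.p + b.p, a.q + b.q⟩ := rfl

@[simp] lemma one_def : (1 : Galpha) = ⟨0, 0, 0⟩ := rfl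

@[simp] lemma inv_def (a : Galpha) : a⁻¹ = ⟨-a.j, -a.p, -a.q⟩ := rfl

instance : Group Galpha where
  mul_assoc a b c := by ext <;> simp <;> ring
  one_mul a := by ext <;> simp
  mul_one a := by ext <;> simp
  inv_mul_cancel a := by ext <;> simp <;> ring

end Galpha

/-- The diagonal subspace `{(c, c, c, c) : c ∈ ℚ}` of `ℚ⁴`. -/
def diag : Submodule ℚ (ℚ × ℚ × ℚ × ℚ) where
  carrier := {x | ∃ c : ℚ, x = (c, c, c, c)}
  add_mem' := by rintro _ _ ⟨c, rfl⟩ ⟨d, rfl⟩; exact ⟨c + d, rfl⟩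
  zero_mem' := ⟨0, rfl⟩
  smul_mem' := by rintro t _ ⟨c, rfl⟩; exact ⟨t * c, rfl⟩

/-- The group `𝔄 = ℚ⁴ / {(c,c,c,c)}`. -/
abbrev Afrak := (ℚ × ℚ × ℚ × ℚ) ⧸ diag

/-- `[w₁, w₂, w₃, w₄]`, the class in `𝔄` of `(w₁, w₂, w₃, w₄) ∈ ℚ⁴`. -/
def cls (w : ℚ × ℚ × ℚ × ℚ) : Afrak := Submodule.Quotient.mk w

/-- The group `G = G_α × 𝔄`. -/
abbrev Ggr := Galpha × Multiplicative Afrak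

/-- The subgroup `P₁ = {((−t/2, −t, 0), [0,0,0,0]) : t ∈ ℚ}` of `G`,
as a subset. -/
def P1 : Set Ggr :=
  {g | ∃ t : ℚ, g = (⟨-t / 2, -t, 0⟩, Multiplicative.ofAdd (cls (0, 0, 0, 0)))}

/-- The subgroup `P₃ = {((−s/2, 0, s), [0, r, r + 2s, 2s]) : r, s ∈ ℚ}` of `G`,
as a subset. -/
def P3 : Set Ggr :=
  {g | ∃ r s : ℚ,
    g = (⟨-s / 2, 0, s⟩, Multiplicative.ofAdd (cls (0, r, r + 2 * s, 2 * s)))}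

/-- The normal-form representative `((x, 0, 0), [0, 0, y, z]) ∈ G`. -/
def nf (x y z : ℚ) : Ggr :=
  (⟨x, 0, 0⟩, Multiplicative.ofAdd (cls (0, 0, y, z)))

lemma cls_add (u v : ℚ × ℚ × ℚ × ℚ) : cls u + cls v = cls (u + v) := rfl

lemma prod_eq (t r s x y z : ℚ) :
    ((⟨-t/2, -t, 0⟩ : Galpha), Multiplicative.ofAdd (cls (0,0,0,0))) * nf x y z *
      ((⟨-s/2, 0, s⟩ : Galpha), Multiplicative.ofAdd (cls (0, r, r + 2*s, 2*s)))
    = ((⟨x - t/2 - s/2 + t*s, -t, s⟩ : Galpha),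
        Multiplicative.ofAdd (cls (0, r, y + r + 2*s, z + 2*s))) := by
  unfold nf
  refine Prod.ext ?_ ?_
  · show ((⟨-t/2, -t, 0⟩ : Galpha) * ⟨x, 0, 0⟩ * ⟨-s/2, 0, s⟩) = _
    ext <;> simp <;> ring
  · show Multiplicative.ofAdd (cls (0,0,0,0)) * Multiplicative.ofAdd (cls (0,0,y,z)) *
      Multiplicative.ofAdd (cls (0, r, r + 2*s, 2*s)) = _
    rw [← ofAdd_add, ← ofAdd_add, cls_add, cls_add]
    congr 1
    unfold cls
    congr 1
    simp only [Prod.mk_add_mk, Prod.mk.injEq]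
    refine ⟨by ring, by ring, by ring, by ring⟩

/-- Every element `g` of `G` can be written as `g = h * ((x,0,0),[0,0,y,z]) * k`
with `h ∈ P₁` and `k ∈ P₃` for exactly one triple `(x, y, z) ∈ ℚ³`; that is,
the map `(x, y, z) ↦ P₁ · ((x,0,0),[0,0,y,z]) · P₃` is a bijection from `ℚ³`
to the set of double cosets `P₁\G/P₃`. -/
theorem stmt_3 (g : Ggr) :
    ∃! w : ℚ × ℚ × ℚ, ∃ h ∈ P1, ∃ k ∈ P3, g = h * nf w.1 w.2.1 w.2.2 * k := by
  obtain ⟨a, A⟩ := g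
  obtain ⟨wv, rfl⟩ := Multiplicative.ofAdd.surjective A
  obtain ⟨⟨w1, w2, w3, w4⟩, rfl⟩ := Submodule.Quotient.mk_surjective diag wv
  obtain ⟨j, p, q⟩ := a
  refine ⟨(j - p/2 + q/2 + p*q, w3 - w2 - 2*q, w4 - w1 - 2*q), ⟨?_, ?_⟩⟩
  · refine ⟨_, ⟨-p, rfl⟩, _, ⟨w2 - w1, q, rfl⟩, ?_⟩
    rw [prod_eq]
    refine Prod.ext ?_ ?_
    · ext <;> simp <;> ring
    · show Multiplicative.ofAdd (cls _) = Multiplicative.ofAdd (cls _)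
      congr 1
      unfold cls
      rw [Submodule.Quotient.eq]
      refine ⟨w1, ?_⟩
      simp only [Prod.mk_sub_mk, Prod.mk.injEq]
      refine ⟨by ring, by ring, by ring, by ring⟩
  · rintro ⟨x, y, z⟩ ⟨h, ⟨t, rfl⟩, k, ⟨r, s, rfl⟩, heq⟩
    rw [prod_eq] at heq
    obtain ⟨h1, h2⟩ := Prod.mk.injEq .. ▸ heq
    have hG : (⟨j, p, q⟩ : Galpha) = ⟨x - t/2 - s/2 + t*s, -t, s⟩ := h1
    obtain ⟨hj, hp, hq⟩ := Galpha.mk.injEq .. ▸ hG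
    have h2' : cls (w1, w2, w3, w4) = cls (0, r, y + r + 2*s, z + 2*s) :=
      Multiplicative.ofAdd.injective h2
    rw [cls, cls, Submodule.Quotient.eq] at h2'
    obtain ⟨c, hc⟩ := h2'
    simp [Prod.ext_iff, sub_eq_iff_eq_add] at hc
    obtain ⟨hc1, hc2, hc3, hc4⟩ := hc
    refine Prod.ext ?_ (Prod.ext ?_ ?_) <;> simp <;>
      [skip; skip; skip]
    · subst hj hp hq; ring
    · subst hq hc1 hc2 hc3; ring
    · subst hq hc1 hc4; ring
end

section
/- For all rational numbers m and n, the double cosets P₁ · ((−m − n/2, 0, −n), [0,0,0,0]) · P₃ and P₁ · ((−m − n, 0, 0), [0, 0, 2n, 2n]) · P₃ in G are equal. -/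
/-- The double coset `P₁ · g · P₃ ⊆ G`. -/
def dcoset (g : Ggr) : Set Ggr := {x | ∃ h ∈ P1, ∃ k ∈ P3, x = h * g * k}

/-- For all `m n : ℚ`, the double cosets
`P₁ · ((−m − n/2, 0, −n), [0,0,0,0]) · P₃` and
`P₁ · ((−m − n, 0, 0), [0, 0, 2n, 2n]) · P₃` in `G` are equal. -/
theorem stmt_4 (m n : ℚ) :
    dcoset (⟨-m - n / 2, 0, -n⟩, Multiplicative.ofAdd (cls (0, 0, 0, 0))) =
    dcoset (⟨-m - n, 0, 0⟩, Multiplicative.ofAdd (cls (0, 0, 2 * n, 2 * n))) := by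
  have key : ∀ a b : ℚ × ℚ × ℚ × ℚ,
      Multiplicative.ofAdd (cls a) * Multiplicative.ofAdd (cls b)
        = Multiplicative.ofAdd (cls (a + b)) := fun a b => rfl
  ext x
  simp only [dcoset, P1, P3, Set.mem_setOf_eq]
  constructor
  · rintro ⟨h, ⟨t, rfl⟩, k, ⟨r, s, rfl⟩, rfl⟩
    refine ⟨_, ⟨t, rfl⟩, _, ⟨r, s - n, rfl⟩, ?_⟩
    refine Prod.ext ?_ ?_
    · show (Galpha.mk _ _ _ * _ * _) = (Galpha.mk _ _ _ * _ * _)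
      ext <;> simp <;> ring
    · show _ * _ * _ = _ * _ * _
      simp only [key]
      congr 2
      simp only [Prod.mk_add_mk, Prod.mk.injEq]
      refine ⟨trivial, trivial, by ring, by ring⟩
  · rintro ⟨h, ⟨t, rfl⟩, k, ⟨r, s, rfl⟩, rfl⟩
    refine ⟨_, ⟨t, rfl⟩, _, ⟨r, s + n, rfl⟩, ?_⟩
    refine Prod.ext ?_ ?_
    · show (Galpha.mk _ _ _ * _ * _) = (Galpha.mk _ _ _ * _ * _)
      ext <;> simp <;> ring
    · show _ * _ * _ = _ * _ * _
      simp only [key]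
      congr 2
      simp only [Prod.mk_add_mk, Prod.mk.injEq]
      refine ⟨trivial, trivial, by ring, by ring⟩
end

section
/- For all rational numbers m and n, the double cosets P₁ · (((−m − n/2, 0, −n), [0,0,0,0]) * ((−1/2, −1, 0), [0,0,0,0])) · P₃ and P₁ · ((−m + n, 0, 0), [0, 0, 2n, 2n]) · P₃ in G are equal. -/
/-- For all `m n : ℚ`, the double cosets
`P₁ · (((−m − n/2, 0, −n), [0,0,0,0]) * ((−1/2, −1, 0), [0,0,0,0])) · P₃` and
`P₁ · ((−m + n, 0, 0), [0, 0, 2n, 2n]) · P₃` in `G` are equal. -/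
theorem stmt_5 (m n : ℚ) :
    dcoset (((⟨-m - n / 2, 0, -n⟩ : Galpha),
        Multiplicative.ofAdd (cls (0, 0, 0, 0))) *
      ((⟨-1 / 2, -1, 0⟩ : Galpha), Multiplicative.ofAdd (cls (0, 0, 0, 0)))) =
    dcoset (⟨-m + n, 0, 0⟩, Multiplicative.ofAdd (cls (0, 0, 2 * n, 2 * n))) := by
  have key : ∀ (a b : ℚ × ℚ × ℚ × ℚ), cls a + cls b = cls (a + b) := by
    intro a b; exact (Submodule.Quotient.mk_add _).symm
  ext x
  simp only [dcoset, P1, P3, Set.mem_setOf_eq]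
  constructor
  · rintro ⟨h, ⟨t, rfl⟩, k, ⟨r, s, rfl⟩, rfl⟩
    refine ⟨_, ⟨t + 1, rfl⟩, _, ⟨r, s - n, rfl⟩, ?_⟩
    refine Prod.ext ?_ ?_
    · show (⟨-t/2,-t,0⟩ * (⟨-m - n/2,0,-n⟩ * ⟨-1/2,-1,0⟩) * ⟨-s/2,0,s⟩ : Galpha) = _
      ext <;> simp <;> ring
    · show Multiplicative.ofAdd (cls _ + (cls _ + cls _) + cls _) =
        Multiplicative.ofAdd (cls _ + cls _ + cls _)
      simp only [key]
      congr 1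
      refine congrArg cls ?_
      simp [Prod.ext_iff]; ring_nf; norm_num
  · rintro ⟨h, ⟨t, rfl⟩, k, ⟨r, s, rfl⟩, rfl⟩
    refine ⟨_, ⟨t - 1, rfl⟩, _, ⟨r, s + n, rfl⟩, ?_⟩
    refine Prod.ext ?_ ?_
    · show (⟨-t/2,-t,0⟩ * ⟨-m + n,0,0⟩ * ⟨-s/2,0,s⟩ : Galpha) = _
      ext <;> simp <;> ring
    · show Multiplicative.ofAdd (cls _ + cls _ + cls _) =
        Multiplicative.ofAdd (cls _ + (cls _ + cls _) + cls _)
      simp only [key]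
      congr 1
      refine congrArg cls ?_
      simp [Prod.ext_iff]; ring_nf; norm_num
end

section
/- Let M₁ be the right 𝓑-module with generators x_c (= ι_c), x_a (= ι_a), x_b, x_{b'}, x_B, x_{B'} (each = ι_b), x_D, x_{D'} (each = ι_d) in the respective free summands, equipped with the unique right-𝓑-linear endomorphism ∂ satisfying ∂x_c = x_b·q₂q₁q₄ + x_D·p₁p₂p₃, ∂x_a = x_{b'}·q₂, ∂x_b = x_{D'}·p₁p₂, ∂x_D = x_B·q₂q₁, ∂x_{D'} = x_{B'}·q₂q₁ + x_a·q₁, ∂x_B = x_a·p₂, ∂x_{B'} = x_{b'}, ∂x_{b'} = 0. Let N₁ be the right 𝓑-module with generators y_c (= ι_c), y_a (= ι_a), y_b, y_B (each = ι_b), y_D, y_{D'} (each = ι_d), equipped with the unique right-𝓑-linear endomorphism ∂ satisfying ∂y_c = y_b·q₂q₁q₄ + y_D·p₁p₂p₃, ∂y_b = y_{D'}·p₁p₂, ∂y_D = y_B·q₂q₁, ∂y_{D'} = y_a·q₁, ∂y_B = y_a·p₂, ∂y_a = 0. Then (M₁, ∂) and (N₁, ∂) are differential modules over 𝓑 (i.e.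 ∂ ∘ ∂ = 0 in both), and they are homotopy equivalent. -/
/-- The field with two elements. -/
abbrev F2 := ZMod 2

/-- Generators of the peculiar algebra `𝓑`: the idempotents `ι_a, ι_b, ι_c, ι_d`
and the arrows `p₁, p₂, p₃, q₁, q₂, q₄`. -/
inductive BGen : Type
  | ia : BGen
  | ib : BGen
  | ic : BGen
  | id : BGen
  | p1 : BGen
  | p2 : BGen
  | p3 : BGen
  | q1 : BGen
  | q2 : BGen
  | q4 : BGen

/-- The free `𝔽₂`-algebra on the generators. -/
abbrev FB := FreeAlgebra F2 BGen

/-- The generators, as elements of the free algebra. -/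
def gB : BGen → FB := FreeAlgebra.ι F2

/-- The four idempotent generators. -/
def eGen : Fin 4 → BGen := ![.ia, .ib, .ic, .id]

/-- The defining relations of the peculiar algebra `𝓑`: `ι_a, ι_b, ι_c, ι_d` are
pairwise orthogonal idempotents summing to `1`; `p₁ = ι_d p₁ ι_a`,
`q₁ = ι_a q₁ ι_d`, `p₂ = ι_a p₂ ι_b`, `q₂ = ι_b q₂ ι_a`, `p₃ = ι_b p₃ ι_c`,
`q₄ = ι_d q₄ ι_c`; and `p₁q₁ = q₁p₁ = p₂q₂ = q₂p₂ = 0`. -/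
inductive BRel : FB → FB → Prop
  | idem (i : Fin 4) : BRel (gB (eGen i) * gB (eGen i)) (gB (eGen i))
  | orth (i j : Fin 4) (h : i ≠ j) : BRel (gB (eGen i) * gB (eGen j)) 0
  | sum_idem : BRel (gB .ia + gB .ib + gB .ic + gB .id) 1
  | sand_p1 : BRel (gB .p1) (gB .id * gB .p1 * gB .ia)
  | sand_q1 : BRel (gB .q1) (gB .ia * gB .q1 * gB .id)
  | sand_p2 : BRel (gB .p2) (gB .ia * gB .p2 * gB .ib)
  | sand_q2 : BRel (gB .q2) (gB .ib * gB .q2 * gB .ia)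
  | sand_p3 : BRel (gB .p3) (gB .ib * gB .p3 * gB .ic)
  | sand_q4 : BRel (gB .q4) (gB .id * gB .q4 * gB .ic)
  | p1q1 : BRel (gB .p1 * gB .q1) 0
  | q1p1 : BRel (gB .q1 * gB .p1) 0
  | p2q2 : BRel (gB .p2 * gB .q2) 0
  | q2p2 : BRel (gB .q2 * gB .p2) 0

/-- The peculiar algebra `𝓑`, presented by generators and relations. -/
abbrev PeculiarAlgebra := RingQuot BRel

/-- The quotient map onto the peculiar algebra. -/
def mkB : FB →ₐ[F2] PeculiarAlgebra := RingQuot.mkAlgHom F2 BRel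

open MulOpposite

/-- Short name for the opposite algebra: scalars for *right* `𝓑`-modules. -/
abbrev Bop := PeculiarAlgebraᵐᵒᵖ

/-- The idempotents `ι_a, ι_b, ι_c, ι_d` of `𝓑`. -/
def ea : PeculiarAlgebra := mkB (gB .ia)
def eb : PeculiarAlgebra := mkB (gB .ib)
def ec : PeculiarAlgebra := mkB (gB .ic)
def ed : PeculiarAlgebra := mkB (gB .id)

/-- The arrows `p₁, p₂, p₃, q₁, q₂, q₄` of `𝓑`. -/
def pe1 : PeculiarAlgebra := mkB (gB .p1)
def pe2 : PeculiarAlgebra := mkB (gB .p2)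
def pe3 : PeculiarAlgebra := mkB (gB .p3)
def qe1 : PeculiarAlgebra := mkB (gB .q1)
def qe2 : PeculiarAlgebra := mkB (gB .q2)
def qe4 : PeculiarAlgebra := mkB (gB .q4)

lemma idemSq (i : Fin 4) :
    mkB (gB (eGen i)) * mkB (gB (eGen i)) = mkB (gB (eGen i)) := by
  rw [← map_mul]; exact RingQuot.mkAlgHom_rel F2 (BRel.idem i)

/-- The right ideal `e𝓑 = {x | e·x = x}` (for `e` idempotent), as a right
`𝓑`-submodule of `𝓑`, i.e. a submodule for the `𝓑ᵐᵒᵖ`-action `b • x = x * b`. -/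
def rId (e : PeculiarAlgebra) : Submodule Bop PeculiarAlgebra where
  carrier := {x | e * x = x}
  add_mem' := by
    intro x y hx hy
    simp only [Set.mem_setOf_eq] at *
    rw [mul_add, hx, hy]
  zero_mem' := by simp
  smul_mem' := by
    intro c x hx
    simp only [Set.mem_setOf_eq, MulOpposite.smul_eq_mul_unop] at *
    rw [← mul_assoc, hx]

lemma mem_rId {e x : PeculiarAlgebra} : x ∈ rId e ↔ e * x = x := Iff.rfl

lemma ea_mem : ea ∈ rId ea := idemSq 0
lemma eb_mem : eb ∈ rId eb := idemSq 1
lemma ec_mem : ec ∈ rId ec := idemSq 2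
lemma ed_mem : ed ∈ rId ed := idemSq 3

/-- Homotopy equivalence of differential right `𝓑`-modules `(M, dM)` and
`(N, dN)`: there are right-`𝓑`-linear maps `f : M → N` and `g : N → M`
commuting with the differentials, and right-`𝓑`-linear homotopies `h`, `k`
with `g ∘ f = id + dM∘h + h∘dM` and `f ∘ g = id + dN∘k + k∘dN`. -/
def IsHtpyEquiv {M N : Type} [AddCommGroup M] [AddCommGroup N]
    [Module Bop M] [Module Bop N]
    (dM : M →ₗ[Bop] M) (dN : N →ₗ[Bop] N) : Prop :=
  ∃ (f : M →ₗ[Bop] N) (g : N →ₗ[Bop] M) (h : M →ₗ[Bop] M) (k : N →ₗ[Bop] N),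
    f ∘ₗ dM = dN ∘ₗ f ∧ g ∘ₗ dN = dM ∘ₗ g ∧
    g ∘ₗ f = LinearMap.id + dM ∘ₗ h + h ∘ₗ dM ∧
    f ∘ₗ g = LinearMap.id + dN ∘ₗ k + k ∘ₗ dN

/-- The right `𝓑`-module `M₁ = ι_c𝓑 ⊕ ι_a𝓑 ⊕ ι_b𝓑 ⊕ ι_b𝓑 ⊕ ι_b𝓑 ⊕ ι_b𝓑 ⊕ ι_d𝓑 ⊕ ι_d𝓑`,
with summands corresponding to the generators `x_c, x_a, x_b, x_{b'}, x_B, x_{B'}, x_D, x_{D'}`. -/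
abbrev M1 := ↥(rId ec) × ↥(rId ea) × ↥(rId eb) × ↥(rId eb) ×
  ↥(rId eb) × ↥(rId eb) × ↥(rId ed) × ↥(rId ed)

/-- The generators of `M₁` (the respective idempotents in the summands). -/
def xc : M1 := (⟨ec, ec_mem⟩, 0, 0, 0, 0, 0, 0, 0)
def xa : M1 := (0, ⟨ea, ea_mem⟩, 0, 0, 0, 0, 0, 0)
def xb : M1 := (0, 0, ⟨eb, eb_mem⟩, 0, 0, 0, 0, 0)
def xb' : M1 := (0, 0, 0, ⟨eb, eb_mem⟩, 0, 0, 0, 0)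
def xB : M1 := (0, 0, 0, 0, ⟨eb, eb_mem⟩, 0, 0, 0)
def xB' : M1 := (0, 0, 0, 0, 0, ⟨eb, eb_mem⟩, 0, 0)
def xD : M1 := (0, 0, 0, 0, 0, 0, ⟨ed, ed_mem⟩, 0)
def xD' : M1 := (0, 0, 0, 0, 0, 0, 0, ⟨ed, ed_mem⟩)

/-- The defining conditions on the differential of `M₁`:
`∂x_c = x_b·q₂q₁q₄ + x_D·p₁p₂p₃`, `∂x_a = x_{b'}·q₂`, `∂x_b = x_{D'}·p₁p₂`,
`∂x_D = x_B·q₂q₁`, `∂x_{D'} = x_{B'}·q₂q₁ + x_a·q₁`, `∂x_B = x_a·p₂`,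
`∂x_{B'} = x_{b'}`, `∂x_{b'} = 0` (right action written as `op β • x = x·β`). -/
def condM1 (d : M1 →ₗ[Bop] M1) : Prop :=
  d xc = op (qe2 * qe1 * qe4) • xb + op (pe1 * pe2 * pe3) • xD ∧
  d xa = op qe2 • xb' ∧
  d xb = op (pe1 * pe2) • xD' ∧
  d xD = op (qe2 * qe1) • xB ∧
  d xD' = op (qe2 * qe1) • xB' + op qe1 • xa ∧
  d xB = op pe2 • xa ∧
  d xB' = xb' ∧
  d xb' = 0

/-- The right `𝓑`-module `N₁ = ι_c𝓑 ⊕ ι_a𝓑 ⊕ ι_b𝓑 ⊕ ι_b𝓑 ⊕ ι_d𝓑 ⊕ ι_d𝓑`,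
with summands corresponding to the generators `y_c, y_a, y_b, y_B, y_D, y_{D'}`. -/
abbrev N1 := ↥(rId ec) × ↥(rId ea) × ↥(rId eb) × ↥(rId eb) × ↥(rId ed) × ↥(rId ed)

/-- The generators of `N₁` (the respective idempotents in the summands). -/
def yc : N1 := (⟨ec, ec_mem⟩, 0, 0, 0, 0, 0)
def ya : N1 := (0, ⟨ea, ea_mem⟩, 0, 0, 0, 0)
def yb : N1 := (0, 0, ⟨eb, eb_mem⟩, 0, 0, 0)
def yB : N1 := (0, 0, 0, ⟨eb, eb_mem⟩, 0, 0)
def yD : N1 := (0, 0, 0, 0, ⟨ed, ed_mem⟩, 0)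
def yD' : N1 := (0, 0, 0, 0, 0, ⟨ed, ed_mem⟩)

/-- The defining conditions on the differential of `N₁`:
`∂y_c = y_b·q₂q₁q₄ + y_D·p₁p₂p₃`, `∂y_b = y_{D'}·p₁p₂`, `∂y_D = y_B·q₂q₁`,
`∂y_{D'} = y_a·q₁`, `∂y_B = y_a·p₂`, `∂y_a = 0`. -/
def condN1 (d : N1 →ₗ[Bop] N1) : Prop :=
  d yc = op (qe2 * qe1 * qe4) • yb + op (pe1 * pe2 * pe3) • yD ∧
  d yb = op (pe1 * pe2) • yD' ∧
  d yD = op (qe2 * qe1) • yB ∧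
  d yD' = op qe1 • ya ∧
  d yB = op pe2 • ya ∧
  d ya = 0

set_option synthInstance.maxHeartbeats 1000000
set_option maxHeartbeats 2000000
-- algebra lemmas
lemma relEq {a b : FB} (h : BRel a b) : mkB a = mkB b := RingQuot.mkAlgHom_rel F2 h

lemma ea_sq : ea * ea = ea := by
  have := idemSq 0
  simpa [eGen, ea] using this
lemma eb_sq : eb * eb = eb := by
  have := idemSq 1
  simpa [eGen, eb] using this
lemma ec_sq : ec * ec = ec := by
  have := idemSq 2
  simpa [eGen, ec] using this
lemma ed_sq : ed * ed = ed := by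
  have := idemSq 3
  simpa [eGen, ed] using this

lemma p1_sand : pe1 = ed * pe1 * ea := by
  have := relEq BRel.sand_p1
  simpa [pe1, ed, ea, map_mul] using this
lemma q1_sand : qe1 = ea * qe1 * ed := by
  have := relEq BRel.sand_q1
  simpa [qe1, ea, ed, map_mul] using this
lemma p2_sand : pe2 = ea * pe2 * eb := by
  have := relEq BRel.sand_p2
  simpa [pe2, ea, eb, map_mul] using this
lemma q2_sand : qe2 = eb * qe2 * ea := by
  have := relEq BRel.sand_q2
  simpa [qe2, eb, ea, map_mul] using this
lemma p3_sand : pe3 = eb * pe3 * ec := by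
  have := relEq BRel.sand_p3
  simpa [pe3, eb, ec, map_mul] using this
lemma q4_sand : qe4 = ed * qe4 * ec := by
  have := relEq BRel.sand_q4
  simpa [qe4, ed, ec, map_mul] using this

lemma q4_ec : qe4 * ec = qe4 := by rw [q4_sand, mul_assoc, ec_sq]
lemma p3_ec : pe3 * ec = pe3 := by rw [p3_sand, mul_assoc, ec_sq]
lemma q2_ea : qe2 * ea = qe2 := by rw [q2_sand, mul_assoc, ea_sq]
lemma p2_eb : pe2 * eb = pe2 := by rw [p2_sand, mul_assoc, eb_sq]
lemma q1_ed : qe1 * ed = qe1 := by rw [q1_sand, mul_assoc, ed_sq]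
lemma p1_ea : pe1 * ea = pe1 := by rw [p1_sand, mul_assoc, ea_sq]

lemma p1q1 : pe1 * qe1 = 0 := by
  have := relEq BRel.p1q1
  simpa [pe1, qe1, map_mul] using this
lemma q1p1 : qe1 * pe1 = 0 := by
  have := relEq BRel.q1p1
  simpa [pe1, qe1, map_mul] using this
lemma p2q2 : pe2 * qe2 = 0 := by
  have := relEq BRel.p2q2
  simpa [pe2, qe2, map_mul] using this
lemma q2p2 : qe2 * pe2 = 0 := by
  have := relEq BRel.q2p2
  simpa [pe2, qe2, map_mul] using this

lemma p1q1' (x : PeculiarAlgebra) : pe1 * (qe1 * x) = 0 := by rw [← mul_assoc, p1q1, zero_mul]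
lemma q1p1' (x : PeculiarAlgebra) : qe1 * (pe1 * x) = 0 := by rw [← mul_assoc, q1p1, zero_mul]
lemma p2q2' (x : PeculiarAlgebra) : pe2 * (qe2 * x) = 0 := by rw [← mul_assoc, p2q2, zero_mul]
lemma q2p2' (x : PeculiarAlgebra) : qe2 * (pe2 * x) = 0 := by rw [← mul_assoc, q2p2, zero_mul]

lemma two_eq_zero_B : (1 + 1 : PeculiarAlgebra) = 0 := by
  have h1 : (1 : PeculiarAlgebra) = algebraMap F2 PeculiarAlgebra 1 := (map_one _).symm
  have h2 : (1 + 1 : F2) = 0 := by decide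
  rw [h1, ← map_add, h2, map_zero]

lemma add_self_eq_zero' {T : Type} [AddCommGroup T] [Module Bop T] (x : T) : x + x = 0 := by
  have h : (1 + 1 : Bop) = 0 := by
    have := two_eq_zero_B
    calc (1 + 1 : Bop) = op (1 + 1 : PeculiarAlgebra) := by simp
      _ = 0 := by rw [this, op_zero]
  calc x + x = (1 + 1 : Bop) • x := by rw [add_smul, one_smul]
    _ = 0 := by rw [h, zero_smul]

lemma op_smul_op_smul2 {T : Type} [AddCommGroup T] [Module Bop T]
    (a b : PeculiarAlgebra) (x : T) : op a • op b • x = op (b * a) • x := by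
  rw [smul_smul, ← op_mul]
section Maps
variable {T : Type} [AddCommGroup T] [Module Bop T]

/-- Build a right-linear map out of `M1` from the images of the 8 generators. -/
def mkM1Map (t0 t1 t2 t3 t4 t5 t6 t7 : T) : M1 →ₗ[Bop] T where
  toFun x := op (x.1 : PeculiarAlgebra) • t0 + op (x.2.1 : PeculiarAlgebra) • t1 +
    op (x.2.2.1 : PeculiarAlgebra) • t2 + op (x.2.2.2.1 : PeculiarAlgebra) • t3 +
    op (x.2.2.2.2.1 : PeculiarAlgebra) • t4 + op (x.2.2.2.2.2.1 : PeculiarAlgebra) • t5 +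
    op (x.2.2.2.2.2.2.1 : PeculiarAlgebra) • t6 + op (x.2.2.2.2.2.2.2 : PeculiarAlgebra) • t7
  map_add' x y := by
    simp only [Prod.fst_add, Prod.snd_add, Submodule.coe_add, op_add, add_smul]
    abel
  map_smul' c x := by
    simp only [Prod.smul_fst, Prod.smul_snd, Submodule.coe_smul,
      MulOpposite.smul_eq_mul_unop, op_mul, op_unop, RingHom.id_apply, smul_add, smul_smul]

def mkN1Map (t0 t1 t2 t3 t4 t5 : T) : N1 →ₗ[Bop] T where
  toFun x := op (x.1 : PeculiarAlgebra) • t0 + op (x.2.1 : PeculiarAlgebra) • t1 +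
    op (x.2.2.1 : PeculiarAlgebra) • t2 + op (x.2.2.2.1 : PeculiarAlgebra) • t3 +
    op (x.2.2.2.2.1 : PeculiarAlgebra) • t4 + op (x.2.2.2.2.2 : PeculiarAlgebra) • t5
  map_add' x y := by
    simp only [Prod.fst_add, Prod.snd_add, Submodule.coe_add, op_add, add_smul]
    abel
  map_smul' c x := by
    simp only [Prod.smul_fst, Prod.smul_snd, Submodule.coe_smul,
      MulOpposite.smul_eq_mul_unop, op_mul, op_unop, RingHom.id_apply, smul_add, smul_smul]

end Maps
section Apply
variable {T : Type} [AddCommGroup T] [Module Bop T]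
variable (t0 t1 t2 t3 t4 t5 t6 t7 : T)

lemma mkM1Map_xc : mkM1Map t0 t1 t2 t3 t4 t5 t6 t7 xc = op ec • t0 := by
  simp [mkM1Map, xc]
lemma mkM1Map_xa : mkM1Map t0 t1 t2 t3 t4 t5 t6 t7 xa = op ea • t1 := by
  simp [mkM1Map, xa]
lemma mkM1Map_xb : mkM1Map t0 t1 t2 t3 t4 t5 t6 t7 xb = op eb • t2 := by
  simp [mkM1Map, xb]
lemma mkM1Map_xb' : mkM1Map t0 t1 t2 t3 t4 t5 t6 t7 xb' = op eb • t3 := by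
  simp [mkM1Map, xb']
lemma mkM1Map_xB : mkM1Map t0 t1 t2 t3 t4 t5 t6 t7 xB = op eb • t4 := by
  simp [mkM1Map, xB]
lemma mkM1Map_xB' : mkM1Map t0 t1 t2 t3 t4 t5 t6 t7 xB' = op eb • t5 := by
  simp [mkM1Map, xB']
lemma mkM1Map_xD : mkM1Map t0 t1 t2 t3 t4 t5 t6 t7 xD = op ed • t6 := by
  simp [mkM1Map, xD]
lemma mkM1Map_xD' : mkM1Map t0 t1 t2 t3 t4 t5 t6 t7 xD' = op ed • t7 := by
  simp [mkM1Map, xD']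

lemma mkN1Map_yc : mkN1Map t0 t1 t2 t3 t4 t5 yc = op ec • t0 := by
  simp [mkN1Map, yc]
lemma mkN1Map_ya : mkN1Map t0 t1 t2 t3 t4 t5 ya = op ea • t1 := by
  simp [mkN1Map, ya]
lemma mkN1Map_yb : mkN1Map t0 t1 t2 t3 t4 t5 yb = op eb • t2 := by
  simp [mkN1Map, yb]
lemma mkN1Map_yB : mkN1Map t0 t1 t2 t3 t4 t5 yB = op eb • t3 := by
  simp [mkN1Map, yB]
lemma mkN1Map_yD : mkN1Map t0 t1 t2 t3 t4 t5 yD = op ed • t4 := by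
  simp [mkN1Map, yD]
lemma mkN1Map_yD' : mkN1Map t0 t1 t2 t3 t4 t5 yD' = op ed • t5 := by
  simp [mkN1Map, yD']

end Apply

-- idempotent action on generators
lemma ec_xc : op ec • xc = xc := by
  simp [xc, Prod.ext_iff, Subtype.ext_iff, MulOpposite.smul_eq_mul_unop, ec_sq]

lemma M1_decomp (x : M1) : x = op (x.1 : PeculiarAlgebra) • xc +
    op (x.2.1 : PeculiarAlgebra) • xa + op (x.2.2.1 : PeculiarAlgebra) • xb +
    op (x.2.2.2.1 : PeculiarAlgebra) • xb' + op (x.2.2.2.2.1 : PeculiarAlgebra) • xB +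
    op (x.2.2.2.2.2.1 : PeculiarAlgebra) • xB' + op (x.2.2.2.2.2.2.1 : PeculiarAlgebra) • xD +
    op (x.2.2.2.2.2.2.2 : PeculiarAlgebra) • xD' := by
  obtain ⟨x1, x2, x3, x4, x5, x6, x7, x8⟩ := x
  simp only [xc, xa, xb, xb', xB, xB', xD, xD', Prod.smul_mk, smul_zero, Prod.mk_add_mk,
    add_zero, zero_add]
  refine Prod.ext ?_ (Prod.ext ?_ (Prod.ext ?_ (Prod.ext ?_ (Prod.ext ?_ (Prod.ext ?_
    (Prod.ext ?_ ?_)))))) <;>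
    exact Subtype.ext (by simp [MulOpposite.smul_eq_mul_unop, mem_rId.mp (Subtype.mem _)])
lemma ea_xa : op ea • xa = xa := by
  simp [xa, Prod.ext_iff, Subtype.ext_iff, MulOpposite.smul_eq_mul_unop, ea_sq]

lemma eb_xb : op eb • xb = xb := by
  simp [xb, Prod.ext_iff, Subtype.ext_iff, MulOpposite.smul_eq_mul_unop, eb_sq]

lemma eb_xbp : op eb • xb' = xb' := by
  simp [xb', Prod.ext_iff, Subtype.ext_iff, MulOpposite.smul_eq_mul_unop, eb_sq]

lemma eb_xB : op eb • xB = xB := by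
  simp [xB, Prod.ext_iff, Subtype.ext_iff, MulOpposite.smul_eq_mul_unop, eb_sq]

lemma eb_xBp : op eb • xB' = xB' := by
  simp [xB', Prod.ext_iff, Subtype.ext_iff, MulOpposite.smul_eq_mul_unop, eb_sq]

lemma ed_xD : op ed • xD = xD := by
  simp [xD, Prod.ext_iff, Subtype.ext_iff, MulOpposite.smul_eq_mul_unop, ed_sq]

lemma ed_xDp : op ed • xD' = xD' := by
  simp [xD', Prod.ext_iff, Subtype.ext_iff, MulOpposite.smul_eq_mul_unop, ed_sq]

lemma ec_yc : op ec • yc = yc := by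
  simp [yc, Prod.ext_iff, Subtype.ext_iff, MulOpposite.smul_eq_mul_unop, ec_sq]

lemma ea_ya : op ea • ya = ya := by
  simp [ya, Prod.ext_iff, Subtype.ext_iff, MulOpposite.smul_eq_mul_unop, ea_sq]

lemma eb_yb : op eb • yb = yb := by
  simp [yb, Prod.ext_iff, Subtype.ext_iff, MulOpposite.smul_eq_mul_unop, eb_sq]

lemma eb_yB : op eb • yB = yB := by
  simp [yB, Prod.ext_iff, Subtype.ext_iff, MulOpposite.smul_eq_mul_unop, eb_sq]

lemma ed_yD : op ed • yD = yD := by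
  simp [yD, Prod.ext_iff, Subtype.ext_iff, MulOpposite.smul_eq_mul_unop, ed_sq]

lemma ed_yDp : op ed • yD' = yD' := by
  simp [yD', Prod.ext_iff, Subtype.ext_iff, MulOpposite.smul_eq_mul_unop, ed_sq]

lemma N1_decomp (x : N1) : x = op (x.1 : PeculiarAlgebra) • yc +
    op (x.2.1 : PeculiarAlgebra) • ya + op (x.2.2.1 : PeculiarAlgebra) • yb +
    op (x.2.2.2.1 : PeculiarAlgebra) • yB + op (x.2.2.2.2.1 : PeculiarAlgebra) • yD +
    op (x.2.2.2.2.2 : PeculiarAlgebra) • yD' := by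
  obtain ⟨x1, x2, x3, x4, x5, x6⟩ := x
  simp only [yc, ya, yb, yB, yD, yD', Prod.smul_mk, smul_zero, Prod.mk_add_mk,
    add_zero, zero_add]
  refine Prod.ext ?_ (Prod.ext ?_ (Prod.ext ?_ (Prod.ext ?_ (Prod.ext ?_ ?_)))) <;>
    exact Subtype.ext (by simp [MulOpposite.smul_eq_mul_unop, mem_rId.mp (Subtype.mem _)])

section Ext
variable {T : Type} [AddCommGroup T] [Module Bop T]

lemma M1_ext {L L' : M1 →ₗ[Bop] T} (h1 : L xc = L' xc) (h2 : L xa = L' xa)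
    (h3 : L xb = L' xb) (h4 : L xb' = L' xb') (h5 : L xB = L' xB) (h6 : L xB' = L' xB')
    (h7 : L xD = L' xD) (h8 : L xD' = L' xD') : L = L' := by
  refine LinearMap.ext fun x => ?_
  conv_lhs => rw [M1_decomp x]
  conv_rhs => rw [M1_decomp x]
  simp only [map_add, map_smul, h1, h2, h3, h4, h5, h6, h7, h8]

lemma N1_ext {L L' : N1 →ₗ[Bop] T} (h1 : L yc = L' yc) (h2 : L ya = L' ya)
    (h3 : L yb = L' yb) (h4 : L yB = L' yB) (h5 : L yD = L' yD) (h6 : L yD' = L' yD') :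
    L = L' := by
  refine LinearMap.ext fun x => ?_
  conv_lhs => rw [N1_decomp x]
  conv_rhs => rw [N1_decomp x]
  simp only [map_add, map_smul, h1, h2, h3, h4, h5, h6]

end Ext

lemma M1_add_self (x : M1) : x + x = 0 := add_self_eq_zero' (T := M1) x
lemma N1_add_self (x : N1) : x + x = 0 := add_self_eq_zero' (T := N1) x
/-- The differential of `M₁`. -/
def DM : M1 →ₗ[Bop] M1 := mkM1Map
  (op (qe2 * qe1 * qe4) • xb + op (pe1 * pe2 * pe3) • xD)
  (op qe2 • xb')
  (op (pe1 * pe2) • xD')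
  0
  (op pe2 • xa)
  xb'
  (op (qe2 * qe1) • xB)
  (op (qe2 * qe1) • xB' + op qe1 • xa)

/-- The differential of `N₁`. -/
def DN : N1 →ₗ[Bop] N1 := mkN1Map
  (op (qe2 * qe1 * qe4) • yb + op (pe1 * pe2 * pe3) • yD)
  0
  (op (pe1 * pe2) • yD')
  (op pe2 • ya)
  (op (qe2 * qe1) • yB)
  (op qe1 • ya)

lemma DM_xc : DM xc = op (qe2 * qe1 * qe4) • xb + op (pe1 * pe2 * pe3) • xD := by
  simp only [LinearMap.comp_apply, LinearMap.zero_apply, map_add, map_smul, map_zero, mul_zero, zero_mul, op_zero, zero_smul, smul_zero, add_zero, zero_add, M1_add_self, N1_add_self, smul_add, DM, mkM1Map_xc, smul_add, smul_smul, ← op_mul, mul_assoc, q4_ec, p3_ec]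
lemma DM_xa : DM xa = op qe2 • xb' := by
  simp only [LinearMap.comp_apply, LinearMap.zero_apply, map_add, map_smul, map_zero, mul_zero, zero_mul, op_zero, zero_smul, smul_zero, add_zero, zero_add, M1_add_self, N1_add_self, smul_add, DM, mkM1Map_xa, smul_smul, ← op_mul, q2_ea]
lemma DM_xb : DM xb = op (pe1 * pe2) • xD' := by
  simp only [LinearMap.comp_apply, LinearMap.zero_apply, map_add, map_smul, map_zero, mul_zero, zero_mul, op_zero, zero_smul, smul_zero, add_zero, zero_add, M1_add_self, N1_add_self, smul_add, DM, mkM1Map_xb, smul_smul, ← op_mul, mul_assoc, p2_eb]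
lemma DM_xb' : DM xb' = 0 := by
  simp only [LinearMap.comp_apply, LinearMap.zero_apply, map_add, map_smul, map_zero, mul_zero, zero_mul, op_zero, zero_smul, smul_zero, add_zero, zero_add, M1_add_self, N1_add_self, smul_add, DM, mkM1Map_xb']
lemma DM_xB : DM xB = op pe2 • xa := by
  simp only [LinearMap.comp_apply, LinearMap.zero_apply, map_add, map_smul, map_zero, mul_zero, zero_mul, op_zero, zero_smul, smul_zero, add_zero, zero_add, M1_add_self, N1_add_self, smul_add, DM, mkM1Map_xB, smul_smul, ← op_mul, p2_eb]
lemma DM_xB' : DM xB' = xb' := by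
  simp only [LinearMap.comp_apply, LinearMap.zero_apply, map_add, map_smul, map_zero, mul_zero, zero_mul, op_zero, zero_smul, smul_zero, add_zero, zero_add, M1_add_self, N1_add_self, smul_add, DM, mkM1Map_xB', eb_xbp]
lemma DM_xD : DM xD = op (qe2 * qe1) • xB := by
  simp only [LinearMap.comp_apply, LinearMap.zero_apply, map_add, map_smul, map_zero, mul_zero, zero_mul, op_zero, zero_smul, smul_zero, add_zero, zero_add, M1_add_self, N1_add_self, smul_add, DM, mkM1Map_xD, smul_smul, ← op_mul, mul_assoc, q1_ed]
lemma DM_xD' : DM xD' = op (qe2 * qe1) • xB' + op qe1 • xa := by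
  simp only [LinearMap.comp_apply, LinearMap.zero_apply, map_add, map_smul, map_zero, mul_zero, zero_mul, op_zero, zero_smul, smul_zero, add_zero, zero_add, M1_add_self, N1_add_self, smul_add, DM, mkM1Map_xD', smul_add, smul_smul, ← op_mul, mul_assoc, q1_ed]

lemma DN_yc : DN yc = op (qe2 * qe1 * qe4) • yb + op (pe1 * pe2 * pe3) • yD := by
  simp only [LinearMap.comp_apply, LinearMap.zero_apply, map_add, map_smul, map_zero, mul_zero, zero_mul, op_zero, zero_smul, smul_zero, add_zero, zero_add, M1_add_self, N1_add_self, smul_add, DN, mkN1Map_yc, smul_add, smul_smul, ← op_mul, mul_assoc, q4_ec, p3_ec]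
lemma DN_ya : DN ya = 0 := by
  simp only [LinearMap.comp_apply, LinearMap.zero_apply, map_add, map_smul, map_zero, mul_zero, zero_mul, op_zero, zero_smul, smul_zero, add_zero, zero_add, M1_add_self, N1_add_self, smul_add, DN, mkN1Map_ya]
lemma DN_yb : DN yb = op (pe1 * pe2) • yD' := by
  simp only [LinearMap.comp_apply, LinearMap.zero_apply, map_add, map_smul, map_zero, mul_zero, zero_mul, op_zero, zero_smul, smul_zero, add_zero, zero_add, M1_add_self, N1_add_self, smul_add, DN, mkN1Map_yb, smul_smul, ← op_mul, mul_assoc, p2_eb]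
lemma DN_yB : DN yB = op pe2 • ya := by
  simp only [LinearMap.comp_apply, LinearMap.zero_apply, map_add, map_smul, map_zero, mul_zero, zero_mul, op_zero, zero_smul, smul_zero, add_zero, zero_add, M1_add_self, N1_add_self, smul_add, DN, mkN1Map_yB, smul_smul, ← op_mul, p2_eb]
lemma DN_yD : DN yD = op (qe2 * qe1) • yB := by
  simp only [LinearMap.comp_apply, LinearMap.zero_apply, map_add, map_smul, map_zero, mul_zero, zero_mul, op_zero, zero_smul, smul_zero, add_zero, zero_add, M1_add_self, N1_add_self, smul_add, DN, mkN1Map_yD, smul_smul, ← op_mul, mul_assoc, q1_ed]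
lemma DN_yD' : DN yD' = op qe1 • ya := by
  simp only [LinearMap.comp_apply, LinearMap.zero_apply, map_add, map_smul, map_zero, mul_zero, zero_mul, op_zero, zero_smul, smul_zero, add_zero, zero_add, M1_add_self, N1_add_self, smul_add, DN, mkN1Map_yD', smul_smul, ← op_mul, q1_ed]

lemma condM1_DM : condM1 DM :=
  ⟨DM_xc, DM_xa, DM_xb, DM_xD, DM_xD', DM_xB, DM_xB', DM_xb'⟩
lemma condN1_DN : condN1 DN :=
  ⟨DN_yc, DN_yb, DN_yD, DN_yD', DN_yB, DN_ya⟩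

lemma condM1_unique {d : M1 →ₗ[Bop] M1} (h : condM1 d) : d = DM := by
  obtain ⟨h1, h2, h3, h4, h5, h6, h7, h8⟩ := h
  refine M1_ext (T := M1) ?_ ?_ ?_ ?_ ?_ ?_ ?_ ?_
  · rw [h1, DM_xc]
  · rw [h2, DM_xa]
  · rw [h3, DM_xb]
  · rw [h8, DM_xb']
  · rw [h6, DM_xB]
  · rw [h7, DM_xB']
  · rw [h4, DM_xD]
  · rw [h5, DM_xD']

lemma condN1_unique {d : N1 →ₗ[Bop] N1} (h : condN1 d) : d = DN := by
  obtain ⟨h1, h2, h3, h4, h5, h6⟩ := h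
  refine N1_ext (T := N1) ?_ ?_ ?_ ?_ ?_ ?_
  · rw [h1, DN_yc]
  · rw [h6, DN_ya]
  · rw [h2, DN_yb]
  · rw [h5, DN_yB]
  · rw [h3, DN_yD]
  · rw [h4, DN_yD']

lemma DM_sq : DM ∘ₗ DM = 0 := by
  refine M1_ext (T := M1) ?_ ?_ ?_ ?_ ?_ ?_ ?_ ?_ <;>
    simp only [LinearMap.comp_apply, LinearMap.zero_apply, map_add, map_smul, map_zero, mul_zero, zero_mul, op_zero, zero_smul, smul_zero, add_zero, zero_add, M1_add_self, N1_add_self, smul_add, DM_xc, DM_xa, DM_xb, DM_xb', DM_xB, DM_xB', DM_xD, DM_xD',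
      smul_smul, ← op_mul, mul_assoc, p1q1, q1p1, p2q2, q2p2, p1q1', q1p1', p2q2', q2p2',
      add_self_eq_zero']

lemma DN_sq : DN ∘ₗ DN = 0 := by
  refine N1_ext (T := N1) ?_ ?_ ?_ ?_ ?_ ?_ <;>
    simp only [LinearMap.comp_apply, LinearMap.zero_apply, map_add, map_smul, map_zero, mul_zero, zero_mul, op_zero, zero_smul, smul_zero, add_zero, zero_add, M1_add_self, N1_add_self, smul_add, DN_yc, DN_ya, DN_yb, DN_yB, DN_yD, DN_yD',
      smul_smul, ← op_mul, mul_assoc, p1q1, q1p1, p2q2, q2p2, p1q1', q1p1', p2q2', q2p2',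
      add_self_eq_zero']
/-- The homotopy equivalence `f : M₁ → N₁`. -/
def Fm : M1 →ₗ[Bop] N1 := mkM1Map yc ya yb 0 yB 0 yD yD'
/-- The homotopy inverse `g : N₁ → M₁`. -/
def Gm : N1 →ₗ[Bop] M1 := mkN1Map xc (xa + op qe2 • xB') xb xB xD xD'
/-- The homotopy `h : M₁ → M₁`. -/
def Hm : M1 →ₗ[Bop] M1 := mkM1Map 0 0 0 xB' 0 0 0 0

lemma Fm_xc : Fm xc = yc := by simp only [Fm, mkM1Map_xc, ec_yc]
lemma Fm_xa : Fm xa = ya := by simp only [Fm, mkM1Map_xa, ea_ya]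
lemma Fm_xb : Fm xb = yb := by simp only [Fm, mkM1Map_xb, eb_yb]
lemma Fm_xb' : Fm xb' = 0 := by simp only [Fm, mkM1Map_xb', smul_zero]
lemma Fm_xB : Fm xB = yB := by simp only [Fm, mkM1Map_xB, eb_yB]
lemma Fm_xB' : Fm xB' = 0 := by simp only [Fm, mkM1Map_xB', smul_zero]
lemma Fm_xD : Fm xD = yD := by simp only [Fm, mkM1Map_xD, ed_yD]
lemma Fm_xD' : Fm xD' = yD' := by simp only [Fm, mkM1Map_xD', ed_yDp]

lemma Gm_yc : Gm yc = xc := by simp only [Gm, mkN1Map_yc, ec_xc]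
lemma Gm_ya : Gm ya = xa + op qe2 • xB' := by
  simp only [Gm, mkN1Map_ya, smul_add, ea_xa, smul_smul, ← op_mul, q2_ea]
lemma Gm_yb : Gm yb = xb := by simp only [Gm, mkN1Map_yb, eb_xb]
lemma Gm_yB : Gm yB = xB := by simp only [Gm, mkN1Map_yB, eb_xB]
lemma Gm_yD : Gm yD = xD := by simp only [Gm, mkN1Map_yD, ed_xD]
lemma Gm_yD' : Gm yD' = xD' := by simp only [Gm, mkN1Map_yD', ed_xDp]

lemma Hm_xc : Hm xc = 0 := by simp only [Hm, mkM1Map_xc, smul_zero]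
lemma Hm_xa : Hm xa = 0 := by simp only [Hm, mkM1Map_xa, smul_zero]
lemma Hm_xb : Hm xb = 0 := by simp only [Hm, mkM1Map_xb, smul_zero]
lemma Hm_xb' : Hm xb' = xB' := by simp only [Hm, mkM1Map_xb', eb_xBp]
lemma Hm_xB : Hm xB = 0 := by simp only [Hm, mkM1Map_xB, smul_zero]
lemma Hm_xB' : Hm xB' = 0 := by simp only [Hm, mkM1Map_xB', smul_zero]
lemma Hm_xD : Hm xD = 0 := by simp only [Hm, mkM1Map_xD, smul_zero]
lemma Hm_xD' : Hm xD' = 0 := by simp only [Hm, mkM1Map_xD', smul_zero]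

lemma F_chain : Fm ∘ₗ DM = DN ∘ₗ Fm := by
  refine M1_ext (T := N1) ?_ ?_ ?_ ?_ ?_ ?_ ?_ ?_ <;>
    simp only [LinearMap.comp_apply, map_add, map_smul, map_zero,
      DM_xc, DM_xa, DM_xb, DM_xb', DM_xB, DM_xB', DM_xD, DM_xD',
      DN_yc, DN_ya, DN_yb, DN_yB, DN_yD, DN_yD',
      Fm_xc, Fm_xa, Fm_xb, Fm_xb', Fm_xB, Fm_xB', Fm_xD, Fm_xD',
      smul_zero, add_zero, zero_add]

lemma G_chain : Gm ∘ₗ DN = DM ∘ₗ Gm := by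
  refine N1_ext (T := M1) ?_ ?_ ?_ ?_ ?_ ?_ <;>
    simp only [LinearMap.comp_apply, map_add, map_smul, map_zero,
      DM_xc, DM_xa, DM_xb, DM_xb', DM_xB, DM_xB', DM_xD, DM_xD',
      DN_yc, DN_ya, DN_yb, DN_yB, DN_yD, DN_yD',
      Gm_yc, Gm_ya, Gm_yb, Gm_yB, Gm_yD, Gm_yD',
      smul_add, smul_smul, ← op_mul, q2p2, q2p2', zero_mul, mul_zero, op_zero,
      zero_smul, smul_zero, add_zero, zero_add, M1_add_self] <;>
    abel

lemma GF_htpy : Gm ∘ₗ Fm = LinearMap.id + DM ∘ₗ Hm + Hm ∘ₗ DM := by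
  refine M1_ext (T := M1) ?_ ?_ ?_ ?_ ?_ ?_ ?_ ?_ <;>
    simp only [LinearMap.comp_apply, LinearMap.add_apply, LinearMap.id_apply,
      map_add, map_smul, map_zero,
      DM_xc, DM_xa, DM_xb, DM_xb', DM_xB, DM_xB', DM_xD, DM_xD',
      Fm_xc, Fm_xa, Fm_xb, Fm_xb', Fm_xB, Fm_xB', Fm_xD, Fm_xD',
      Gm_yc, Gm_ya, Gm_yb, Gm_yB, Gm_yD, Gm_yD',
      Hm_xc, Hm_xa, Hm_xb, Hm_xb', Hm_xB, Hm_xB', Hm_xD, Hm_xD',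
      smul_zero, add_zero, zero_add, M1_add_self]

lemma FG_htpy : Fm ∘ₗ Gm = LinearMap.id := by
  refine N1_ext (T := N1) ?_ ?_ ?_ ?_ ?_ ?_ <;>
    simp only [LinearMap.comp_apply, LinearMap.id_apply, map_add, map_smul,
      Fm_xc, Fm_xa, Fm_xb, Fm_xb', Fm_xB, Fm_xB', Fm_xD, Fm_xD',
      Gm_yc, Gm_ya, Gm_yb, Gm_yB, Gm_yD, Gm_yD',
      smul_zero, add_zero, zero_add]
/-- There is a unique right-`𝓑`-linear endomorphism `∂` of `M₁` satisfying the
stated conditions on the generators, and likewise for `N₁`; both are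
differentials (`∂ ∘ ∂ = 0`), and the resulting differential modules `(M₁, ∂)`
and `(N₁, ∂)` are homotopy equivalent. -/
theorem stmt_9 :
    (∃! dM : M1 →ₗ[Bop] M1, condM1 dM) ∧
    (∃! dN : N1 →ₗ[Bop] N1, condN1 dN) ∧
    ∀ (dM : M1 →ₗ[Bop] M1) (dN : N1 →ₗ[Bop] N1), condM1 dM → condN1 dN →
      dM ∘ₗ dM = 0 ∧ dN ∘ₗ dN = 0 ∧ IsHtpyEquiv (M := M1) (N := N1) dM dN := by
  refine ⟨⟨DM, condM1_DM, fun d hd => condM1_unique hd⟩,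
    ⟨DN, condN1_DN, fun d hd => condN1_unique hd⟩, ?_⟩
  intro dM dN hM hN
  have hdM : dM = DM := condM1_unique hM
  have hdN : dN = DN := condN1_unique hN
  subst hdM hdN
  refine ⟨DM_sq, DN_sq, Fm, Gm, Hm, 0, F_chain, G_chain, GF_htpy, ?_⟩
  rw [FG_htpy]
  simp only [LinearMap.comp_zero, LinearMap.zero_comp, add_zero]
end
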